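/- arXiv:2106.06294 — 6 statements merged into one kernel-verified Lean document; each statement's English description precedes it below -/
import Mathlib

section
/- For any d×d positive semidefinite complex (Hermitian) matrix J and any d×d positive definite real symmetric matrix G, the minimum of Tr(GV) over all d×d real symmetric matrices V satisfying V ≥ J (in the Loewner order on complex Hermitian matrices, viewing V as complex) equals Tr(G·Re J) + Tr|√G (Im J) √G|, where |·| denotes the matrix absolute value. -/
open Matrix
open scoped ComplexOrder
noncomputable section

/-- Entrywise real part, as a complex matrix. -/
def reM {m n : Type*} (J : Matrix m n ℂ) : Matrix m n ℂ := fun i j => ((J i j).re : ℂ)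

/-- Entrywise imaginary part, as a complex matrix. -/
def imM {m n : Type*} (J : Matrix m n ℂ) : Matrix m n ℂ := fun i j => ((J i j).im : ℂ)

/-- A complex matrix has all real entries. -/
def IsRealMat {m n : Type*} (A : Matrix m n ℂ) : Prop := ∀ i j, (A i j).im = 0

/-- The positive semidefinite square root of a positive semidefinite matrix (removed from
Mathlib; restated with its former definition). -/
def Matrix.PosSemidef.sqrt {n 𝕜 : Type*} [Fintype n] [DecidableEq n] [RCLike 𝕜]
    {A : Matrix n n 𝕜} (hA : A.PosSemidef) : Matrix n n 𝕜 :=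
  (hA.1.eigenvectorUnitary : Matrix n n 𝕜) * diagonal ((↑) ∘ (√·) ∘ hA.1.eigenvalues) *
    (star hA.1.eigenvectorUnitary : Matrix n n 𝕜)

/-- Matrix absolute value `|A| = √(Aᴴ A)`. -/
def matAbs {n : Type*} [Fintype n] [DecidableEq n] (A : Matrix n n ℂ) : Matrix n n ℂ :=
  (Matrix.posSemidef_conjTranspose_mul_self A).sqrt

/-
Write `J = Re J + i Im J` and `R = √G`. Entrywise conjugation preserves positivity and fixes
a real `V`, so `V ≥ J` gives both `V - Re J ≥ i Im J` and `V - Re J ≥ -i Im J`. Conjugating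
by `R`, the matrix `M = R (V - Re J) R` satisfies `M ± H ≥ 0` for the Hermitian
`H = i R (Im J) R`; reading this off the diagonal in an eigenbasis of `H` gives
`Tr M ≥ ∑ |λᵢ(H)| = Tr |H| = Tr |R (Im J) R|`. Equality holds for `M = |H|`, i.e. for
`V = Re J + R⁻¹ |H| R⁻¹`, which is real because `R` and `R (Im J) R` are, and satisfies
`V - J = R⁻¹ (|H| - H) R⁻¹ ≥ 0`.
-/

namespace Matrix.PosSemidef

open scoped MatrixOrder

variable {n : Type*} [Fintype n] [DecidableEq n] {A : Matrix n n ℂ}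

theorem sqrt_eq_cfcSqrt (hA : A.PosSemidef) : hA.sqrt = CFC.sqrt A := by
  rw [CFC.sqrt_eq_cfc, cfc_nnreal_eq_real _ A, hA.1.cfc_eq]
  simp only [IsHermitian.cfc, Unitary.conjStarAlgAut_apply, PosSemidef.sqrt]
  congr 3
  funext i
  simp [Real.coe_sqrt, Real.coe_toNNReal', max_eq_left (hA.eigenvalues_nonneg i)]

theorem posSemidef_sqrt (hA : A.PosSemidef) : hA.sqrt.PosSemidef := by
  rw [sqrt_eq_cfcSqrt]
  exact (CFC.sqrt_nonneg A).posSemidef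

theorem sqrt_mul_self (hA : A.PosSemidef) : hA.sqrt * hA.sqrt = A := by
  rw [sqrt_eq_cfcSqrt]
  exact CFC.sqrt_mul_sqrt_self A hA.nonneg

theorem eq_sqrt_of_mul_self_eq {B : Matrix n n ℂ} (hA : A.PosSemidef) (hB : B.PosSemidef)
    (h : B * B = A) : B = hA.sqrt := by
  rw [sqrt_eq_cfcSqrt, eq_comm, CFC.sqrt_eq_iff A B hA.nonneg hB.nonneg, h]

end Matrix.PosSemidef

section MatAbs

open scoped MatrixOrder

variable {n : Type*} [Fintype n] [DecidableEq n]

theorem matAbs_congr {A B : Matrix n n ℂ} (h : Aᴴ * A = Bᴴ * B) : matAbs A = matAbs B := by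
  unfold matAbs
  congr 1

theorem matAbs_smul {z : ℂ} (hz : ‖z‖ = 1) (A : Matrix n n ℂ) :
    matAbs (z • A) = matAbs A := by
  refine matAbs_congr ?_
  rw [conjTranspose_smul, smul_mul_smul_comm, Complex.star_def, Complex.conj_mul', hz]
  simp

theorem Matrix.IsHermitian.matAbs_eq_cfc {H : Matrix n n ℂ} (hH : H.IsHermitian) :
    matAbs H = cfc (fun x : ℝ => |x|) H := by
  have habs : (cfc (fun x : ℝ => |x|) H).PosSemidef :=
    (cfc_nonneg fun x _ => abs_nonneg x).posSemidef
  refine (PosSemidef.eq_sqrt_of_mul_self_eq _ habs ?_).symm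
  rw [← cfc_mul .., hH.eq]
  simp only [abs_mul_abs_self]
  rw [cfc_mul (fun x : ℝ => x) (fun x => x) H, cfc_id' ℝ H]

theorem Matrix.IsHermitian.posSemidef_matAbs_sub {H : Matrix n n ℂ} (hH : H.IsHermitian) :
    (matAbs H - H).PosSemidef := by
  have h : matAbs H - H = cfc (fun x : ℝ => |x| - x) H := by
    rw [cfc_sub .., cfc_id' ℝ H, hH.matAbs_eq_cfc]
  rw [h]
  exact (cfc_nonneg fun x _ => sub_nonneg.2 (le_abs_self x)).posSemidef

theorem Matrix.IsHermitian.trace_matAbs {H : Matrix n n ℂ} (hH : H.IsHermitian) :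
    (matAbs H).trace = ((∑ i, |hH.eigenvalues i| : ℝ) : ℂ) := by
  rw [hH.matAbs_eq_cfc, hH.cfc_eq, IsHermitian.cfc, Unitary.conjStarAlgAut_apply,
    trace_mul_cycle, Unitary.coe_star_mul_self, one_mul, trace_diagonal]
  simp

theorem Matrix.IsHermitian.re_trace_matAbs_le {H N : Matrix n n ℂ} (hH : H.IsHermitian)
    (h₁ : (N - H).PosSemidef) (h₂ : (N + H).PosSemidef) :
    (matAbs H).trace.re ≤ N.trace.re := by
  set U : Matrix n n ℂ := (hH.eigenvectorUnitary : Matrix n n ℂ)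
  have hdiag : star U * H * U = diagonal (RCLike.ofReal ∘ hH.eigenvalues) := by
    simpa using hH.conjStarAlgAut_star_eigenvectorUnitary
  have hbound (i : n) : |hH.eigenvalues i| ≤ ((star U * N * U) i i).re := by
    have p₁ := (h₁.conjTranspose_mul_mul_same U).diag_nonneg (i := i)
    have p₂ := (h₂.conjTranspose_mul_mul_same U).diag_nonneg (i := i)
    rw [← star_eq_conjTranspose, Matrix.mul_sub, Matrix.sub_mul, hdiag] at p₁
    rw [← star_eq_conjTranspose, Matrix.mul_add, Matrix.add_mul, hdiag] at p₂
    simp only [sub_apply, add_apply, diagonal_apply_eq, Function.comp_apply,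
      RCLike.ofReal_eq_complex_ofReal, Complex.nonneg_iff, Complex.sub_re, Complex.add_re,
      Complex.ofReal_re] at p₁ p₂
    exact abs_le.2 ⟨by linarith [p₂.1], by linarith [p₁.1]⟩
  have htrN : N.trace = (star U * N * U).trace := by
    rw [trace_mul_cycle, Matrix.mem_unitaryGroup_iff.mp hH.eigenvectorUnitary.2, one_mul]
  rw [hH.trace_matAbs, htrN, trace, Complex.re_sum]
  simpa using Finset.sum_le_sum fun i _ => hbound i

end MatAbs

section RealMatrices

variable {l m n : Type*}

theorem isRealMat_iff_map_conj {A : Matrix m n ℂ} :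
    IsRealMat A ↔ A.map (starRingEnd ℂ) = A := by
  simp only [IsRealMat, ← Complex.conj_eq_iff_im, ← Matrix.ext_iff, map_apply]

theorem IsRealMat.map_conj {A : Matrix m n ℂ} (hA : IsRealMat A) :
    A.map (starRingEnd ℂ) = A :=
  isRealMat_iff_map_conj.1 hA

theorem IsRealMat.add {A B : Matrix m n ℂ} (hA : IsRealMat A) (hB : IsRealMat B) :
    IsRealMat (A + B) := fun i j => by
  simp [hA i j, hB i j]

theorem IsRealMat.mul [Fintype m] {A : Matrix l m ℂ} {B : Matrix m n ℂ} (hA : IsRealMat A)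
    (hB : IsRealMat B) : IsRealMat (A * B) :=
  isRealMat_iff_map_conj.2 <| by rw [Matrix.map_mul, hA.map_conj, hB.map_conj]

theorem IsRealMat.conjTranspose {A : Matrix m n ℂ} (hA : IsRealMat A) : IsRealMat Aᴴ :=
  fun i j => by simp [hA j i]

theorem IsRealMat.inv [Fintype n] [DecidableEq n] {A : Matrix n n ℂ} (hA : IsRealMat A) :
    IsRealMat A⁻¹ := by
  by_cases h : IsUnit A.det
  · refine isRealMat_iff_map_conj.2 (inv_eq_right_inv ?_).symm
    nth_rewrite 1 [← hA.map_conj]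
    rw [← Matrix.map_mul, mul_nonsing_inv A h, Matrix.map_one _ (map_zero _) (map_one _)]
  · rw [nonsing_inv_apply_not_isUnit A h]
    exact fun _ _ => rfl

theorem Matrix.PosSemidef.map_conj [Fintype n] {A : Matrix n n ℂ} (hA : A.PosSemidef) :
    (A.map (starRingEnd ℂ)).PosSemidef := by
  have h : A.map (starRingEnd ℂ) = Aᵀ := by
    ext i j
    exact hA.isHermitian.apply j i
  exact h ▸ hA.transpose

theorem IsRealMat.sqrt [Fintype n] [DecidableEq n] {A : Matrix n n ℂ} (hA : A.PosSemidef)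
    (hAreal : IsRealMat A) : IsRealMat hA.sqrt := by
  refine isRealMat_iff_map_conj.2 (hA.eq_sqrt_of_mul_self_eq hA.posSemidef_sqrt.map_conj ?_)
  rw [← Matrix.map_mul, hA.sqrt_mul_self, hAreal.map_conj]

theorem IsRealMat.matAbs [Fintype n] [DecidableEq n] {A : Matrix n n ℂ} (hA : IsRealMat A) :
    IsRealMat (matAbs A) :=
  (hA.conjTranspose.mul hA).sqrt _

theorem isRealMat_reM (J : Matrix m n ℂ) : IsRealMat (reM J) :=
  fun _ _ => Complex.ofReal_im _

theorem isRealMat_imM (J : Matrix m n ℂ) : IsRealMat (imM J) :=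
  fun _ _ => Complex.ofReal_im _

theorem reM_add_I_smul_imM (J : Matrix m n ℂ) : reM J + Complex.I • imM J = J := by
  ext i j
  apply Complex.ext <;> simp [reM, imM]

theorem map_conj_eq_reM_sub_I_smul_imM (J : Matrix m n ℂ) :
    J.map (starRingEnd ℂ) = reM J - Complex.I • imM J := by
  ext i j
  apply Complex.ext <;> simp [reM, imM]

theorem Matrix.IsHermitian.reM {J : Matrix n n ℂ} (hJ : J.IsHermitian) :
    (reM J).IsHermitian := by
  ext i j
  simp [_root_.reM, ← hJ.apply i j]

theorem isHermitian_mul_I_smul_imM_mul [Fintype n] {J R : Matrix n n ℂ} (hJ : J.IsHermitian)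
    (hR : R.IsHermitian) : (R * (Complex.I • imM J) * R).IsHermitian := by
  have hK : Complex.I • imM J = J - reM J := eq_sub_of_add_eq' (reM_add_I_smul_imM J)
  simpa only [hR.eq, hK] using isHermitian_conjTranspose_mul_mul R (hJ.sub hJ.reM)

end RealMatrices

section Majorant

variable {n : Type*} [Fintype n] [DecidableEq n]

theorem matAbs_mul_I_smul_mul (R B : Matrix n n ℂ) :
    matAbs (R * (Complex.I • B) * R) = matAbs (R * B * R) := by
  rw [Matrix.mul_smul, Matrix.smul_mul, matAbs_smul (by simp)]

theorem re_trace_mul_reM_add_re_trace_matAbs_le {J R V : Matrix n n ℂ} (hJ : J.IsHermitian)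
    (hR : R.IsHermitian) (hV : IsRealMat V) (hVJ : (V - J).PosSemidef) :
    (trace (R * R * reM J)).re + (trace (matAbs (R * imM J * R))).re ≤
      (trace (R * R * V)).re := by
  have h₁ : (R * (V - reM J) * R - R * (Complex.I • imM J) * R).PosSemidef := by
    have hVJ' : V - J = V - reM J - Complex.I • imM J := by rw [sub_sub, reM_add_I_smul_imM]
    convert hVJ.conjTranspose_mul_mul_same R using 1
    rw [hR.eq, hVJ']
    noncomm_ring
  have h₂ : (R * (V - reM J) * R + R * (Complex.I • imM J) * R).PosSemidef := by
    convert hVJ.map_conj.conjTranspose_mul_mul_same R using 1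
    rw [hR.eq, Matrix.map_sub _ (map_sub _), hV.map_conj, map_conj_eq_reM_sub_I_smul_imM]
    noncomm_ring
  have key := (isHermitian_mul_I_smul_imM_mul hJ hR).re_trace_matAbs_le h₁ h₂
  rw [matAbs_mul_I_smul_mul, trace_mul_cycle, Matrix.mul_sub, trace_sub, Complex.sub_re] at key
  linarith

def optimalMajorant (J R : Matrix n n ℂ) : Matrix n n ℂ :=
  reM J + R⁻¹ * matAbs (R * imM J * R) * R⁻¹

theorem isRealMat_optimalMajorant (J : Matrix n n ℂ) {R : Matrix n n ℂ} (hR : IsRealMat R) :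
    IsRealMat (optimalMajorant J R) :=
  (isRealMat_reM J).add ((hR.inv.mul ((hR.mul (isRealMat_imM J)).mul hR).matAbs).mul hR.inv)

theorem posSemidef_optimalMajorant_sub {J R : Matrix n n ℂ} (hJ : J.IsHermitian)
    (hR : R.IsHermitian) (hRu : IsUnit R.det) : (optimalMajorant J R - J).PosSemidef := by
  set H := R * (Complex.I • imM J) * R
  have hH : R⁻¹ * H * R⁻¹ = Complex.I • imM J := by
    rw [← Matrix.mul_assoc, mul_nonsing_inv_cancel_right R _ hRu,
      nonsing_inv_mul_cancel_left R _ hRu]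
  have h : optimalMajorant J R - J = R⁻¹ * (matAbs H - H) * R⁻¹ := by
    rw [Matrix.mul_sub, Matrix.sub_mul, hH, matAbs_mul_I_smul_mul, optimalMajorant]
    nth_rewrite 3 [← reM_add_I_smul_imM J]
    abel
  rw [h]
  simpa only [hR.inv.eq] using
    (isHermitian_mul_I_smul_imM_mul hJ hR).posSemidef_matAbs_sub.mul_mul_conjTranspose_same R⁻¹

theorem trace_mul_optimalMajorant (J : Matrix n n ℂ) {R : Matrix n n ℂ} (hRu : IsUnit R.det) :
    trace (R * R * optimalMajorant J R) =
      trace (R * R * reM J) + trace (matAbs (R * imM J * R)) := by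
  rw [optimalMajorant, Matrix.mul_add, trace_add, add_right_inj, trace_mul_cycle,
    nonsing_inv_mul_cancel_right R _ hRu, trace_mul_cycle, mul_nonsing_inv R hRu, Matrix.one_mul]

end Majorant

/-- For a `d×d` positive semidefinite complex matrix `J` and a `d×d` positive definite real
symmetric matrix `G`, the minimum of `Tr(G V)` over real symmetric matrices `V ≥ J` (Loewner
order) equals `Tr(G Re J) + Tr|√G (Im J) √G|`. -/
theorem min_trace_real_majorant {d : ℕ} (J G : Matrix (Fin d) (Fin d) ℂ)
    (hJ : J.PosSemidef) (hG : G.PosDef) (hGreal : IsRealMat G) :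
    IsLeast {x : ℝ | ∃ V : Matrix (Fin d) (Fin d) ℂ, IsRealMat V ∧ V.IsHermitian ∧
        (V - J).PosSemidef ∧ x = (Matrix.trace (G * V)).re}
      ((Matrix.trace (G * reM J)).re +
        (Matrix.trace (matAbs (hG.posSemidef.sqrt * imM J * hG.posSemidef.sqrt))).re) := by
  set R := hG.posSemidef.sqrt
  have hR : R.IsHermitian := hG.posSemidef.posSemidef_sqrt.isHermitian
  have hRR : R * R = G := hG.posSemidef.sqrt_mul_self
  have hRu : IsUnit R.det :=
    (isUnit_iff_isUnit_det R).mp (isUnit_of_mul_isUnit_left (hRR ▸ hG.isUnit))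
  have hV₀ := posSemidef_optimalMajorant_sub hJ.isHermitian hR hRu
  rw [← hRR]
  refine ⟨⟨optimalMajorant J R, isRealMat_optimalMajorant J (hGreal.sqrt hG.posSemidef), ?_,
    hV₀, ?_⟩, ?_⟩
  · simpa only [sub_add_cancel] using hV₀.isHermitian.add hJ.isHermitian
  · rw [trace_mul_optimalMajorant J hRu, Complex.add_re]
  · rintro _ ⟨V, hV, -, hVJ, rfl⟩
    exact re_trace_mul_reM_add_re_trace_matAbs_le hJ.isHermitian hR hV hVJ
end
end

section
/- Let ρ be a positive definite density operator on a finite-dimensional Hilbert space H with eigenvalues λ₁,…,λₙ > 0. The commutation super operator D_ρ = -i(L_ρ - R_ρ)(L_ρ + R_ρ)⁻¹, where L_ρ(X) = ρX and R_ρ(X) = Xρ, has operator norm (with respect to the inner product ⟨X,Y⟩ = Tr X*(ρY + Yρ)/2) equal to max{|λ-μ|/(λ+μ) : λ, μ eigenvalues of ρ}, which is strictly less than 1. -/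
/-!
In an eigenbasis of `ρ` the inner product `Tr X*(ρY + Yρ)/2` becomes the weighted Hilbert–Schmidt
form `∑ (λⱼ + λₖ)/2 |Xⱼₖ|²`, and the defining equation `D(X)ρ + ρD(X) = i(Xρ - ρX)` decouples
entrywise, so `D` becomes the Schur multiplier with symbol `-i(λⱼ - λₖ)/(λⱼ + λₖ)`. A Schur
multiplier on a weighted Hilbert–Schmidt space has norm equal to the largest modulus of its
symbol, attained at a matrix unit, and `|λ - μ| < λ + μ` for positive `λ, μ`.
-/

open Matrix
open scoped ComplexOrder
noncomputable section

namespace Matrix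

theorem hadamard_single {ι 𝕜 : Type*} [DecidableEq ι] [MulZeroClass 𝕜] (c : Matrix ι ι 𝕜)
    (p q : ι) (a : 𝕜) :
    c ⊙ single p q a = single p q (c p q * a) := by
  ext j k
  by_cases h : p = j ∧ q = k
  · obtain ⟨rfl, rfl⟩ := h
    simp
  · simp [single_apply_of_ne (h := h)]

section WeightedFrobenius

variable {ι 𝕜 : Type*} [Fintype ι] [NormedField 𝕜]

def weightedFrobeniusNorm (w : ι → ι → ℝ) (Y : Matrix ι ι 𝕜) : ℝ :=
  √(∑ j, ∑ k, w j k * ‖Y j k‖ ^ 2)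

variable {w : ι → ι → ℝ}

theorem weightedFrobeniusNorm_le_of_norm_apply_le (hw : ∀ j k, 0 ≤ w j k)
    {Y Z : Matrix ι ι 𝕜} {M : ℝ} (hM : 0 ≤ M) (h : ∀ j k, ‖Z j k‖ ≤ M * ‖Y j k‖) :
    weightedFrobeniusNorm w Z ≤ M * weightedFrobeniusNorm w Y := by
  rw [weightedFrobeniusNorm, weightedFrobeniusNorm, ← Real.sqrt_sq hM,
    ← Real.sqrt_mul (sq_nonneg M), Finset.mul_sum]
  gcongr with j _
  rw [Finset.mul_sum]
  refine Finset.sum_le_sum fun k _ => ?_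
  calc w j k * ‖Z j k‖ ^ 2 ≤ w j k * (M * ‖Y j k‖) ^ 2 := by
        have := hw j k
        gcongr
        exact h j k
    _ = M ^ 2 * (w j k * ‖Y j k‖ ^ 2) := by ring

theorem weightedFrobeniusNorm_single [DecidableEq ι] (hw : ∀ j k, 0 ≤ w j k) (p q : ι) (c : 𝕜) :
    weightedFrobeniusNorm w (single p q c) = √(w p q) * ‖c‖ := by
  have hsum : ∑ j, ∑ k, w j k * ‖single p q c j k‖ ^ 2 = w p q * ‖c‖ ^ 2 := by
    rw [Fintype.sum_eq_single p, Fintype.sum_eq_single q]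
    · simp
    · intro k hk
      simp [single_apply_of_col_ne p p hk.symm]
    · intro j hj
      refine Finset.sum_eq_zero fun k _ => ?_
      simp [single_apply_of_row_ne hj.symm]
  rw [weightedFrobeniusNorm, hsum, Real.sqrt_mul (hw p q), Real.sqrt_sq (norm_nonneg c)]

theorem isGreatest_weightedFrobeniusNorm_hadamard_div [DecidableEq ι] [Nonempty ι]
    (hw : ∀ j k, 0 < w j k) (c : Matrix ι ι 𝕜) :
    IsGreatest {r | ∃ Y, Y ≠ 0 ∧
        r = weightedFrobeniusNorm w (c ⊙ Y) / weightedFrobeniusNorm w Y}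
      (⨆ p : ι × ι, ‖c p.1 p.2‖) := by
  obtain ⟨p, hp⟩ := exists_eq_ciSup_of_finite (f := fun p : ι × ι => ‖c p.1 p.2‖)
  have hle (j k : ι) : ‖c j k‖ ≤ ⨆ p : ι × ι, ‖c p.1 p.2‖ :=
    le_ciSup (f := fun p : ι × ι => ‖c p.1 p.2‖) (Set.finite_range _).bddAbove (j, k)
  have hM : 0 ≤ ⨆ p : ι × ι, ‖c p.1 p.2‖ := (norm_nonneg _).trans (hle p.1 p.2)
  refine ⟨⟨single p.1 p.2 1,
    fun h => one_ne_zero (α := 𝕜) (by simpa using congr_fun₂ h p.1 p.2), ?_⟩, ?_⟩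
  · have hwp : 0 < √(w p.1 p.2) := Real.sqrt_pos.2 (hw _ _)
    rw [hadamard_single, weightedFrobeniusNorm_single (fun j k => (hw j k).le),
      weightedFrobeniusNorm_single (fun j k => (hw j k).le), mul_one, norm_one, mul_one,
      mul_div_cancel_left₀ _ hwp.ne', hp]
  · rintro _ ⟨Y, -, rfl⟩
    refine div_le_of_le_mul₀ (Real.sqrt_nonneg _) hM ?_
    refine weightedFrobeniusNorm_le_of_norm_apply_le (fun j k => (hw j k).le) hM fun j k => ?_
    rw [hadamard_apply, norm_mul]
    gcongr
    exact hle j k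

end WeightedFrobenius

section Commutation

variable {ι : Type*}

def commutationSymbol (lam : ι → ℝ) : Matrix ι ι ℂ :=
  of fun j k => -Complex.I * ((lam j - lam k) / (lam j + lam k))

theorem norm_commutationSymbol_apply {lam : ι → ℝ} (hlam : ∀ j k, 0 < lam j + lam k) (j k : ι) :
    ‖commutationSymbol lam j k‖ = |lam j - lam k| / (lam j + lam k) := by
  rw [commutationSymbol, of_apply, norm_mul, norm_neg, Complex.norm_I, one_mul, norm_div]
  norm_cast
  rw [Real.norm_eq_abs, Real.norm_eq_abs, abs_of_pos (hlam j k)]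

variable [Fintype ι] [DecidableEq ι]

theorem trace_conjStarAlgAut {R : Type*} [CommRing R] [StarRing R]
    (U : unitary (Matrix ι ι R)) (X : Matrix ι ι R) :
    trace (Unitary.conjStarAlgAut R _ U X) = trace X := by
  rw [Unitary.conjStarAlgAut_apply, trace_mul_comm, ← Matrix.mul_assoc, Unitary.coe_star_mul_self,
    Matrix.one_mul]

theorem re_trace_conjTranspose_mul_diagonal_add (lam : ι → ℝ) (Y : Matrix ι ι ℂ) :
    (trace (Yᴴ * (diagonal (RCLike.ofReal ∘ lam) * Y + Y * diagonal (RCLike.ofReal ∘ lam)))).re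
      = ∑ j, ∑ k, (lam j + lam k) * ‖Y j k‖ ^ 2 := by
  have hB : diagonal (RCLike.ofReal ∘ lam) * Y + Y * diagonal (RCLike.ofReal ∘ lam)
      = of fun j k => ((lam j + lam k : ℝ) : ℂ) * Y j k := by
    ext j k
    simp only [add_apply, diagonal_mul, mul_diagonal, of_apply, Function.comp_apply,
      RCLike.ofReal_eq_complex_ofReal]
    push_cast
    ring
  simp only [hB, trace, diag_apply, mul_apply, conjTranspose_apply, of_apply, Complex.re_sum]
  rw [Finset.sum_comm]
  refine Finset.sum_congr rfl fun j _ => Finset.sum_congr rfl fun k _ => ?_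
  rw [mul_left_comm, RCLike.star_def, Complex.conj_mul', Complex.re_ofReal_mul]
  norm_cast

theorem re_trace_conjTranspose_mul_add_eq_sum (U : unitary (Matrix ι ι ℂ)) {ρ : Matrix ι ι ℂ}
    {lam : ι → ℝ} (hρ : Unitary.conjStarAlgAut ℂ _ U ρ = diagonal (RCLike.ofReal ∘ lam))
    (X : Matrix ι ι ℂ) :
    (trace (Xᴴ * (ρ * X + X * ρ))).re
      = ∑ j, ∑ k, (lam j + lam k) * ‖Unitary.conjStarAlgAut ℂ _ U X j k‖ ^ 2 := by
  rw [← trace_conjStarAlgAut U, ← star_eq_conjTranspose, map_mul, map_add, map_mul, map_mul, hρ,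
    map_star, star_eq_conjTranspose, re_trace_conjTranspose_mul_diagonal_add]

theorem eq_commutationSymbol_hadamard {lam : ι → ℝ} (hlam : ∀ j k, lam j + lam k ≠ 0)
    {Y Z : Matrix ι ι ℂ}
    (h : Z * diagonal (RCLike.ofReal ∘ lam) + diagonal (RCLike.ofReal ∘ lam) * Z
      = Complex.I • (Y * diagonal (RCLike.ofReal ∘ lam) - diagonal (RCLike.ofReal ∘ lam) * Y)) :
    Z = commutationSymbol lam ⊙ Y := by
  ext j k
  have hjk := congr_fun₂ h j k
  have hne : (lam j + lam k : ℂ) ≠ 0 := by exact_mod_cast hlam j k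
  simp only [add_apply, sub_apply, smul_apply, mul_diagonal, diagonal_mul, Function.comp_apply,
    smul_eq_mul] at hjk
  simp only [hadamard_apply, commutationSymbol, of_apply]
  field_simp
  linear_combination hjk

end Commutation

end Matrix

theorem abs_sub_div_add_lt_one {a b : ℝ} (ha : 0 < a) (hb : 0 < b) : |a - b| / (a + b) < 1 := by
  rw [div_lt_one (add_pos ha hb), abs_sub_lt_iff]
  constructor <;> linarith

theorem commutationOperator_norm_general {n : ℕ} [NeZero n]
    (ρ : Matrix (Fin n) (Fin n) ℂ) (hρ : ρ.PosDef)
    (D : Matrix (Fin n) (Fin n) ℂ →ₗ[ℂ] Matrix (Fin n) (Fin n) ℂ)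
    (hD : ∀ X, D X * ρ + ρ * D X = Complex.I • (X * ρ - ρ * X)) :
    let nρ : Matrix (Fin n) (Fin n) ℂ → ℝ :=
      fun X => Real.sqrt ((Matrix.trace (Xᴴ * (ρ * X + X * ρ))).re / 2)
    let lam := hρ.1.eigenvalues
    let M : ℝ := ⨆ p : Fin n × Fin n, |lam p.1 - lam p.2| / (lam p.1 + lam p.2)
    IsGreatest {r : ℝ | ∃ X, X ≠ 0 ∧ r = nρ (D X) / nρ X} M ∧ M < 1 := by
  intro nρ lam M
  obtain ⟨U, hU⟩ : ∃ U : unitary (Matrix (Fin n) (Fin n) ℂ),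
      Unitary.conjStarAlgAut ℂ _ U ρ = diagonal (RCLike.ofReal ∘ lam) :=
    ⟨_, hρ.1.conjStarAlgAut_star_eigenvectorUnitary⟩
  set φ := Unitary.conjStarAlgAut ℂ _ U with hφ
  have hlam : ∀ j k, 0 < lam j + lam k := fun j k =>
    add_pos (hρ.eigenvalues_pos j) (hρ.eigenvalues_pos k)
  set w : Fin n → Fin n → ℝ := fun j k => (lam j + lam k) / 2
  have hnρ (X : Matrix (Fin n) (Fin n) ℂ) : nρ X = weightedFrobeniusNorm w (φ X) := by
    show √(_ / 2) = _
    rw [re_trace_conjTranspose_mul_add_eq_sum U hU, ← hφ, weightedFrobeniusNorm]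
    simp only [w, Finset.sum_div, mul_div_right_comm]
  have hφD (X : Matrix (Fin n) (Fin n) ℂ) : φ (D X) = commutationSymbol lam ⊙ φ X := by
    refine eq_commutationSymbol_hadamard (fun j k => (hlam j k).ne') ?_
    simpa only [map_add, map_mul, map_smul, map_sub, hU] using congr_arg φ (hD X)
  have hset : {r : ℝ | ∃ X, X ≠ 0 ∧ r = nρ (D X) / nρ X} = {r | ∃ Y, Y ≠ 0 ∧
      r = weightedFrobeniusNorm w (commutationSymbol lam ⊙ Y) / weightedFrobeniusNorm w Y} := by
    ext r
    simp only [Set.mem_ofPred_eq, hnρ, hφD]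
    exact φ.toEquiv.exists_congr fun X => and_congr_left' (map_ne_zero_iff φ φ.injective).symm
  have hM : M = ⨆ p : Fin n × Fin n, ‖commutationSymbol lam p.1 p.2‖ := by
    simp only [M, norm_commutationSymbol_apply hlam]
  refine ⟨hset ▸ hM ▸ isGreatest_weightedFrobeniusNorm_hadamard_div
    (fun j k => half_pos (hlam j k)) _, ?_⟩
  obtain ⟨p, hp⟩ := exists_eq_ciSup_of_finite
    (f := fun p : Fin n × Fin n => |lam p.1 - lam p.2| / (lam p.1 + lam p.2))
  exact hp.symm.trans_lt <| abs_sub_div_add_lt_one (hρ.eigenvalues_pos _) (hρ.eigenvalues_pos _)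

/-- For a positive definite density matrix `ρ`, the commutation superoperator `D_ρ`
(defined by `D_ρ(X)ρ + ρD_ρ(X) = i(Xρ - ρX)`) has operator norm, with respect to the norm
induced by `⟨X,Y⟩ = Tr X*(ρY + Yρ)/2`, equal to
`max{|λ-μ|/(λ+μ) : λ, μ eigenvalues of ρ}`, and this value is strictly less than 1. -/
theorem commutationOperator_norm {n : ℕ} [NeZero n]
    (ρ : Matrix (Fin n) (Fin n) ℂ) (hρ : ρ.PosDef) (htr : Matrix.trace ρ = 1)
    (D : Matrix (Fin n) (Fin n) ℂ →ₗ[ℂ] Matrix (Fin n) (Fin n) ℂ)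
    (hD : ∀ X, D X * ρ + ρ * D X = Complex.I • (X * ρ - ρ * X)) :
    let nρ : Matrix (Fin n) (Fin n) ℂ → ℝ :=
      fun X => Real.sqrt ((Matrix.trace (Xᴴ * (ρ * X + X * ρ))).re / 2)
    let lam := hρ.1.eigenvalues
    let M : ℝ := ⨆ p : Fin n × Fin n, |lam p.1 - lam p.2| / (lam p.1 + lam p.2)
    IsGreatest {r : ℝ | ∃ X, X ≠ 0 ∧ r = nρ (D X) / nρ X} M ∧ M < 1 :=
  commutationOperator_norm_general ρ hρ D hD
end
end

section
/- Let ρ be a positive definite density operator on a finite-dimensional Hilbert space H and let D_ρ be the commutation super operator defined by D_ρ(X)ρ + ρD_ρ(X) = i(Xρ - ρX). Then for every β ∈ [0,1], the super operator I + iβ·D_ρ on B(H) is invertible. -/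
open Matrix
open scoped ComplexOrder

/-!
If `X + iβ D X = 0`, then `Y = D X` satisfies `(1 - β) Yρ + (1 + β) ρY = 0`. Multiplying on the
left by `Yᴴ` and taking traces gives `(1 - β) tr(YρYᴴ) + (1 + β) tr(YᴴρY) = 0`, a sum of two
nonnegative terms, so `tr(YᴴρY) = 0`; positive definiteness of `ρ` forces `Y = 0`, hence `X = 0`.
Injectivity of `I + iβ D` on the finite-dimensional space of matrices gives bijectivity.
-/

lemma one_sub_smul_mul_add_one_add_smul_mul_eq_zero {A : Type*} [Ring A] [Algebra ℂ A]
    {X Y ρ : A} {β : ℝ} (hY : Y * ρ + ρ * Y = Complex.I • (X * ρ - ρ * X))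
    (hX : X + ((β : ℂ) * Complex.I) • Y = 0) :
    ((1 - β : ℝ) : ℂ) • (Y * ρ) + ((1 + β : ℝ) : ℂ) • (ρ * Y) = 0 := by
  rw [eq_neg_of_add_eq_zero_left hX] at hY
  simp only [neg_mul, mul_neg, smul_mul_assoc, mul_smul_comm] at hY
  linear_combination (norm := match_scalars <;> push_cast <;> ring_nf <;> simp) hY

namespace Matrix.PosDef

variable {m n : Type*} [Fintype m] [Fintype n] {ρ : Matrix n n ℂ}

lemma conjTranspose_mul_mul_same_eq_zero_iff (hρ : ρ.PosDef) {Y : Matrix n m ℂ} :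
    Yᴴ * ρ * Y = 0 ↔ Y = 0 := by
  refine ⟨fun h ↦ ext_iff_mulVec.2 fun v ↦ ?_, fun h ↦ by simp [h]⟩
  by_contra hne
  rw [zero_mulVec] at hne
  have hpos := hρ.dotProduct_mulVec_pos hne
  simp [star_mulVec, dotProduct_mulVec, vecMul_vecMul, ← Matrix.mul_assoc, h] at hpos

lemma eq_zero_of_smul_mul_add_smul_mul_eq_zero (hρ : ρ.PosDef) {a b : ℝ} (ha : 0 ≤ a)
    (hb : 0 < b) {Y : Matrix n n ℂ} (h : (a : ℂ) • (Y * ρ) + (b : ℂ) • (ρ * Y) = 0) :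
    Y = 0 := by
  have htrace : a * (Y * ρ * Yᴴ).trace + b * (Yᴴ * ρ * Y).trace = 0 := by
    simpa [mul_add, trace_add, trace_smul, ← mul_assoc, trace_mul_cycle Y ρ Yᴴ]
      using congrArg (fun M ↦ (Yᴴ * M).trace) h
  have hpsd := hρ.posSemidef.conjTranspose_mul_mul_same Y
  have hzero := ((add_eq_zero_iff_of_nonneg
    (mul_nonneg (Complex.zero_le_real.2 ha)
      (hρ.posSemidef.mul_mul_conjTranspose_same Y).trace_nonneg)
    (mul_nonneg (Complex.zero_le_real.2 hb.le) hpsd.trace_nonneg)).1 htrace).2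
  rw [mul_eq_zero, or_iff_right (by exact_mod_cast hb.ne'), hpsd.trace_eq_zero_iff] at hzero
  exact hρ.conjTranspose_mul_mul_same_eq_zero_iff.1 hzero

end Matrix.PosDef

theorem id_add_smul_commutationOperator_bijective_general {n : ℕ}
    (ρ : Matrix (Fin n) (Fin n) ℂ) (hρ : ρ.PosDef)
    (D : Matrix (Fin n) (Fin n) ℂ →ₗ[ℂ] Matrix (Fin n) (Fin n) ℂ)
    (hD : ∀ X, D X * ρ + ρ * D X = Complex.I • (X * ρ - ρ * X))
    (β : ℝ) (hβ : β ∈ Set.Icc (0 : ℝ) 1) :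
    Function.Bijective (fun X : Matrix (Fin n) (Fin n) ℂ =>
      X + ((β : ℂ) * Complex.I) • D X) := by
  let g := LinearMap.id + ((β : ℂ) * Complex.I) • D
  have hinj : Function.Injective g := by
    refine (injective_iff_map_eq_zero g).2 fun X hX ↦ ?_
    have hDX : D X = 0 := hρ.eq_zero_of_smul_mul_add_smul_mul_eq_zero (by linarith [hβ.2])
      (by linarith [hβ.1]) (one_sub_smul_mul_add_one_add_smul_mul_eq_zero (hD X) hX)
    simpa [g, hDX] using hX
  exact ⟨hinj, LinearMap.injective_iff_surjective.1 hinj⟩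

/-- For a positive definite density matrix `ρ` and the commutation superoperator `D_ρ`
(defined by `D_ρ(X)ρ + ρD_ρ(X) = i(Xρ - ρX)`), the superoperator `I + iβ·D_ρ` on `B(H)`
is invertible for every `β ∈ [0,1]`. -/
theorem id_add_smul_commutationOperator_bijective {n : ℕ}
    (ρ : Matrix (Fin n) (Fin n) ℂ) (hρ : ρ.PosDef) (htr : Matrix.trace ρ = 1)
    (D : Matrix (Fin n) (Fin n) ℂ →ₗ[ℂ] Matrix (Fin n) (Fin n) ℂ)
    (hD : ∀ X, D X * ρ + ρ * D X = Complex.I • (X * ρ - ρ * X))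
    (β : ℝ) (hβ : β ∈ Set.Icc (0 : ℝ) 1) :
    Function.Bijective (fun X : Matrix (Fin n) (Fin n) ℂ =>
      X + ((β : ℂ) * Complex.I) • D X) :=
  id_add_smul_commutationOperator_bijective_general ρ hρ D hD β hβ
end

section
/- Let ρ be a positive definite density operator on a finite-dimensional Hilbert space, and let D_ρ be the commutation operator. If X, Y are Hermitian operators with ⟨X, (I + iD_ρ)(Y)⟩^0 defined via the SLD inner product ⟨A,B⟩^0 = (1/2)Tr A(ρB + Bρ), then Tr XρY = ⟨X, (I + iD_ρ)(Y)⟩^0. Consequently, if X is orthogonal (w.r.t. ⟨·,·⟩^0) to a D_ρ-invariant real subspace T̃ of Hermitian operators containing Y, then Tr XρY = 0. -/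
open Matrix
open scoped ComplexOrder
noncomputable section

/-- For Hermitian `X`, `Y` and a positive definite density matrix `ρ` with commutation
superoperator `D_ρ`: `Tr XρY = ⟨X, (I + iD_ρ)(Y)⟩⁰` where
`⟨A,B⟩⁰ = (1/2)Tr A(ρB + Bρ)`. Consequently, if `X` is `⟨·,·⟩⁰`-orthogonal to a
`D_ρ`-invariant real subspace `T̃` of Hermitian operators containing `Y`, then `Tr XρY = 0`. -/
theorem rld_pairing_and_orthogonality {n : ℕ}
    (ρ : Matrix (Fin n) (Fin n) ℂ) (hρ : ρ.PosDef) (htr : Matrix.trace ρ = 1)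
    (D : Matrix (Fin n) (Fin n) ℂ →ₗ[ℂ] Matrix (Fin n) (Fin n) ℂ)
    (hD : ∀ Z, D Z * ρ + ρ * D Z = Complex.I • (Z * ρ - ρ * Z))
    (X Y : Matrix (Fin n) (Fin n) ℂ) (hX : X.IsHermitian) (hY : Y.IsHermitian) :
    (Matrix.trace (X * ρ * Y) =
      (1 / 2 : ℂ) * Matrix.trace (X *
        (ρ * (Y + Complex.I • D Y) + (Y + Complex.I • D Y) * ρ))) ∧
    (∀ T : Submodule ℝ (Matrix (Fin n) (Fin n) ℂ),
      (∀ Z ∈ T, Z.IsHermitian) → (∀ Z ∈ T, D Z ∈ T) → Y ∈ T →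
      (∀ Z ∈ T, Matrix.trace (X * (ρ * Z + Z * ρ)) = 0) →
      Matrix.trace (X * ρ * Y) = 0) := by
  set W := D Y with hW
  have key : ρ * W + W * ρ = Complex.I • (Y * ρ - ρ * Y) := by
    rw [add_comm]; exact hD Y
  have h2 : ρ * (Y + Complex.I • W) + (Y + Complex.I • W) * ρ
      = (ρ * Y + Y * ρ) + Complex.I • (ρ * W + W * ρ) := by
    simp only [mul_add, add_mul, mul_smul_comm, smul_mul_assoc, smul_add]
    abel
  have h3 : ρ * (Y + Complex.I • W) + (Y + Complex.I • W) * ρ = (2 : ℂ) • (ρ * Y) := by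
    rw [h2, key, smul_smul, Complex.I_mul_I, neg_one_smul]
    module
  have part1 : Matrix.trace (X * ρ * Y) =
      (1 / 2 : ℂ) * Matrix.trace (X *
        (ρ * (Y + Complex.I • W) + (Y + Complex.I • W) * ρ)) := by
    rw [h3, mul_smul_comm, Matrix.trace_smul, mul_assoc, smul_eq_mul]
    ring
  refine ⟨part1, ?_⟩
  intro T hHerm hInv hYT horth
  rw [part1, h2, mul_add, mul_smul_comm, Matrix.trace_add, Matrix.trace_smul,
    horth Y hYT, horth W (hInv Y hYT)]
  simp
end
end

section
/- Let K be a finite-dimensional inner product space with inner product ⟨·,·⟩, S a strictly positive (self-adjoint, positive definite) operator on K, and K₀ ⊆ K a subspace with basis e₁,…,e_d. Define d×d matrices K¹ᵢⱼ = ⟨eᵢ, Seⱼ⟩, K²ᵢⱼ = ⟨eᵢ, eⱼ⟩, K³ᵢⱼ = ⟨eᵢ, S⁻¹eⱼ⟩. Then S(K₀) = K₀ if and only if (K³)⁻¹ = (K²)⁻¹ K¹ (K²)⁻¹. -/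
/-!
Since `S` is injective and `K₀` is finite-dimensional, `S K₀ = K₀` iff `S⁻¹ eⱼ ∈ K₀` for all `j`.
With `B = (K²)⁻¹ K³`, the vector `Σₖ Bₖⱼ eₖ` is the orthogonal projection of `S⁻¹ eⱼ` onto
`K₀`, so `uⱼ = S⁻¹ eⱼ - Σₖ Bₖⱼ eₖ` is orthogonal to `K₀`, and `S uⱼ ⊥ K₀` is exactly the
identity `K¹ B = K²`. When it holds, `⟪uⱼ, S uⱼ⟫ = ⟪S⁻¹ eⱼ, S uⱼ⟫ = ⟪eⱼ, uⱼ⟫ = 0`, so `uⱼ = 0`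
by positivity. Conversely, `S⁻¹ eⱼ = Σₖ Bₖⱼ eₖ` gives `K³ = K² B` and `K² = K¹ B`. Finally,
as `K²` and `K³` are Gram matrices of definite forms, `K¹ (K²)⁻¹ K³ = K²` is a rearrangement
of `(K³)⁻¹ = (K²)⁻¹ K¹ (K²)⁻¹`.
-/

open Matrix Set Submodule
open scoped InnerProductSpace

theorem Submodule.map_span_range_eq_self_iff {K V ι : Type*} [DivisionRing K] [AddCommGroup V]
    [Module K V] [Finite ι] {S Sinv : V →ₗ[K] V} (hinv₁ : ∀ v, Sinv (S v) = v)
    (hinv₂ : ∀ v, S (Sinv v) = v) (e : ι → V) :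
    (span K (range e)).map S = span K (range e) ↔ ∀ j, Sinv (e j) ∈ span K (range e) := by
  constructor
  · intro h j
    obtain ⟨y, hy, hSy⟩ : e j ∈ (span K (range e)).map S :=
      h.symm ▸ subset_span (mem_range_self j)
    rwa [← hSy, hinv₁]
  · intro h
    have hle : span K (range e) ≤ (span K (range e)).map S :=
      span_le.mpr <| range_subset_iff.mpr fun j => ⟨Sinv (e j), h j, hinv₂ _⟩
    have := Module.Finite.span_of_finite K (finite_range e)
    refine (eq_of_le_of_finrank_eq hle ?_).symm
    exact (equivMapOfInjective S (Function.LeftInverse.injective hinv₁) _).finrank_eq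

theorem Matrix.mul_inv_mul_eq_iff_inv_eq {n R : Type*} [Fintype n] [DecidableEq n] [CommRing R]
    {A B C : Matrix n n R} (hA : IsUnit A.det) (hC : IsUnit C.det) :
    B * (A⁻¹ * C) = A ↔ C⁻¹ = A⁻¹ * B * A⁻¹ := by
  constructor
  · intro h
    refine inv_eq_left_inv ?_
    rw [Matrix.mul_assoc, Matrix.mul_assoc, h, nonsing_inv_mul _ hA]
  · intro h
    calc B * (A⁻¹ * C) = A * (A⁻¹ * B * A⁻¹) * C := by
          simp only [Matrix.mul_assoc, mul_nonsing_inv_cancel_left _ _ hA]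
      _ = A := by rw [← h, Matrix.mul_assoc, nonsing_inv_mul _ hC, Matrix.mul_one]

section Gram

variable {𝕜 E ι : Type*} [RCLike 𝕜] [NormedAddCommGroup E] [InnerProductSpace 𝕜 E]

def Matrix.gramWith (T : E →ₗ[𝕜] E) (e : ι → E) : Matrix ι ι 𝕜 :=
  of fun i j => ⟪e i, T (e j)⟫_𝕜

theorem Matrix.gramWith_mulVec [Fintype ι] (T : E →ₗ[𝕜] E) (e : ι → E) (c : ι → 𝕜) :
    gramWith T e *ᵥ c = fun i => ⟪e i, T (∑ j, c j • e j)⟫_𝕜 := by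
  ext i
  simp [gramWith, mulVec, dotProduct, inner_sum, inner_smul_right, mul_comm]

theorem Matrix.gramWith_mul_apply {κ : Type*} [Fintype ι] (T : E →ₗ[𝕜] E) (e : ι → E)
    (C : Matrix ι κ 𝕜) (i : ι) (j : κ) :
    (gramWith T e * C) i j = ⟪e i, T (∑ k, C k j • e k)⟫_𝕜 := by
  simp [gramWith, mul_apply, inner_sum, inner_smul_right, mul_comm]

theorem Matrix.gram_mul_apply {κ : Type*} [Fintype ι] (e : ι → E) (C : Matrix ι κ 𝕜)
    (i : ι) (j : κ) :
    (gram 𝕜 e * C) i j = ⟪e i, ∑ k, C k j • e k⟫_𝕜 := by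
  simp [gram, mul_apply, inner_sum, inner_smul_right, mul_comm]

theorem Matrix.isUnit_det_gram [Fintype ι] [DecidableEq ι] {e : ι → E}
    (he : LinearIndependent 𝕜 e) : IsUnit (gram 𝕜 e).det :=
  isUnit_iff_ne_zero.mpr (det_gram_ne_zero_iff_linearIndependent.mpr he)

theorem inner_sum_smul_eq_zero [Fintype ι] {e : ι → E} {w : E} (c : ι → 𝕜)
    (h : ∀ i, ⟪e i, w⟫_𝕜 = 0) : ⟪∑ i, c i • e i, w⟫_𝕜 = 0 := by
  simp [sum_inner, inner_smul_left, h]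

theorem Matrix.isUnit_det_gramWith [Fintype ι] [DecidableEq ι] {T : E →ₗ[𝕜] E}
    (hT : ∀ v, ⟪v, T v⟫_𝕜 = 0 → v = 0) {e : ι → E} (he : LinearIndependent 𝕜 e) :
    IsUnit (gramWith T e).det := by
  rw [isUnit_iff_ne_zero, Ne, ← exists_mulVec_eq_zero_iff]
  rintro ⟨c, hc, hTc⟩
  rw [gramWith_mulVec] at hTc
  have : ∑ j, c j • e j = 0 := hT _ (inner_sum_smul_eq_zero c (congrFun hTc))
  exact hc (funext (Fintype.linearIndependent_iff.mp he c this))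

variable {S Sinv : E →ₗ[𝕜] E}

theorem eq_zero_of_inner_inv_self_eq_zero (hsa : ∀ v w, ⟪S v, w⟫_𝕜 = ⟪v, S w⟫_𝕜)
    (hS : ∀ v, ⟪v, S v⟫_𝕜 = 0 → v = 0) (hinv : ∀ v, S (Sinv v) = v) (v : E)
    (hv : ⟪v, Sinv v⟫_𝕜 = 0) : v = 0 := by
  have : Sinv v = 0 := hS _ (by rw [← hsa, hinv, hv])
  rw [← hinv v, this, map_zero]

theorem forall_inv_mem_span_iff_gramWith_mul_eq [Fintype ι] [DecidableEq ι]
    (hsa : ∀ v w, ⟪S v, w⟫_𝕜 = ⟪v, S w⟫_𝕜) (hS : ∀ v, ⟪v, S v⟫_𝕜 = 0 → v = 0)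
    (hinv : ∀ v, S (Sinv v) = v) {e : ι → E} (he : LinearIndependent 𝕜 e) :
    (∀ j, Sinv (e j) ∈ span 𝕜 (range e)) ↔
      gramWith S e * ((gram 𝕜 e)⁻¹ * gramWith Sinv e) = gram 𝕜 e := by
  constructor
  · intro h
    choose c hc using fun j => (mem_span_range_iff_exists_fun 𝕜).mp (h j)
    have hK3 : gram 𝕜 e * of (fun k j => c j k) = gramWith Sinv e := by
      ext i j
      simp [gram_mul_apply, hc, gramWith]
    have hK2 : gramWith S e * of (fun k j => c j k) = gram 𝕜 e := by
      ext i j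
      simp [gramWith_mul_apply, hc, hinv, gram_apply]
    rwa [← hK3, nonsing_inv_mul_cancel_left _ _ (isUnit_det_gram he)]
  · intro h j
    set B := (gram 𝕜 e)⁻¹ * gramWith Sinv e
    set u := Sinv (e j) - ∑ k, B k j • e k with hu_def
    have hu : ∀ i, ⟪e i, u⟫_𝕜 = 0 := fun i => by
      rw [inner_sub_right, ← gram_mul_apply, mul_nonsing_inv_cancel_left _ _ (isUnit_det_gram he),
        gramWith, of_apply, sub_self]
    have hSu : ∀ i, ⟪e i, S u⟫_𝕜 = 0 := fun i => by
      rw [map_sub, inner_sub_right, hinv, ← gramWith_mul_apply, h, gram_apply, sub_self]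
    have hu0 : u = 0 := hS u <| by
      rw [hu_def, inner_sub_left, ← hsa, hinv, hu, inner_sum_smul_eq_zero _ hSu, sub_zero]
    exact (mem_span_range_iff_exists_fun 𝕜).mpr ⟨_, (sub_eq_zero.mp hu0).symm⟩

end Gram

theorem posOperator_invariant_iff_gram_general {K : Type*} [NormedAddCommGroup K]
    [InnerProductSpace ℂ K]
    (S Sinv : K →ₗ[ℂ] K)
    (hsa : ∀ v w : K, (inner ℂ (S v) w : ℂ) = inner ℂ v (S w))
    (hpos : ∀ v : K, v ≠ 0 → 0 < (inner ℂ v (S v) : ℂ).re)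
    (hinv₁ : ∀ v, Sinv (S v) = v) (hinv₂ : ∀ v, S (Sinv v) = v)
    {d : ℕ} (e : Fin d → K) (hind : LinearIndependent ℂ e) :
    let K₀ := Submodule.span ℂ (Set.range e)
    let K1 : Matrix (Fin d) (Fin d) ℂ := Matrix.of fun i j => inner ℂ (e i) (S (e j))
    let K2 : Matrix (Fin d) (Fin d) ℂ := Matrix.of fun i j => inner ℂ (e i) (e j)
    let K3 : Matrix (Fin d) (Fin d) ℂ := Matrix.of fun i j => inner ℂ (e i) (Sinv (e j))
    Submodule.map S K₀ = K₀ ↔ K3⁻¹ = K2⁻¹ * K1 * K2⁻¹ := by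
  have hS : ∀ v, ⟪v, S v⟫_ℂ = 0 → v = 0 := fun v hv => by
    by_contra hv0
    simpa [hv] using hpos v hv0
  have hSinv : IsUnit (gramWith Sinv e).det :=
    isUnit_det_gramWith (eq_zero_of_inner_inv_self_eq_zero hsa hS hinv₂) hind
  exact (map_span_range_eq_self_iff hinv₁ hinv₂ e).trans <|
    (forall_inv_mem_span_iff_gramWith_mul_eq hsa hS hinv₂ hind).trans <|
      mul_inv_mul_eq_iff_inv_eq (isUnit_det_gram hind) hSinv

/-- Gram-matrix criterion for invariance of a subspace under a strictly positive operator `S`: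
with `K¹ᵢⱼ = ⟨eᵢ, Seⱼ⟩`, `K²ᵢⱼ = ⟨eᵢ, eⱼ⟩`, `K³ᵢⱼ = ⟨eᵢ, S⁻¹eⱼ⟩` for a basis `e` of `K₀`,
`S(K₀) = K₀` iff `(K³)⁻¹ = (K²)⁻¹ K¹ (K²)⁻¹`. -/
theorem posOperator_invariant_iff_gram {K : Type*} [NormedAddCommGroup K]
    [InnerProductSpace ℂ K] [FiniteDimensional ℂ K]
    (S Sinv : K →ₗ[ℂ] K)
    (hsa : ∀ v w : K, (inner ℂ (S v) w : ℂ) = inner ℂ v (S w))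
    (hpos : ∀ v : K, v ≠ 0 → 0 < (inner ℂ v (S v) : ℂ).re)
    (hinv₁ : ∀ v, Sinv (S v) = v) (hinv₂ : ∀ v, S (Sinv v) = v)
    {d : ℕ} (e : Fin d → K) (hind : LinearIndependent ℂ e) :
    let K₀ := Submodule.span ℂ (Set.range e)
    let K1 : Matrix (Fin d) (Fin d) ℂ := Matrix.of fun i j => inner ℂ (e i) (S (e j))
    let K2 : Matrix (Fin d) (Fin d) ℂ := Matrix.of fun i j => inner ℂ (e i) (e j)
    let K3 : Matrix (Fin d) (Fin d) ℂ := Matrix.of fun i j => inner ℂ (e i) (Sinv (e j))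
    Submodule.map S K₀ = K₀ ↔ K3⁻¹ = K2⁻¹ * K1 * K2⁻¹ :=
  posOperator_invariant_iff_gram_general S Sinv hsa hpos hinv₁ hinv₂ e hind
end

section
/- Let a ∈ ℝ and b ∈ ℝ² with b ≠ 0, and let c ∈ ℝ. Then the minimum over all f ∈ ℝ² of c + ‖f‖² + 2|a + b₂f₁ - b₁f₂| equals c + 2|a| - ‖b‖² if |a| ≥ ‖b‖², and c + a²/‖b‖² otherwise; in particular it equals max over β ∈ [0,1] of (c + 2|a|β - ‖b‖²β²). -/
/-!
Write `u = b₂f₁ - b₁f₂` and `‖b‖² = b₁² + b₂²`. For `β ∈ [0,1]`, the triangle inequality and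
`2β|u| ≤ ‖f‖² + β²‖b‖²` (expand `‖f ∓ β(b₂, -b₁)‖² ≥ 0`) give weak duality
`2|a|β - ‖b‖²β² ≤ ‖f‖² + 2|a + u|`. Equality is attained on both sides: by `β = 1` and
`f = ∓(b₂, -b₁)` when `‖b‖² ≤ |a|`, and by `β = |a|/‖b‖²` and `f = -(a/‖b‖²)(b₂, -b₁)`
(which makes `a + u = 0`) otherwise.
-/

theorem isLeast_and_isGreatest_of_forall_le {α : Type*} [Preorder α] {S T : Set α} {v : α}
    (hle : ∀ x ∈ S, ∀ y ∈ T, y ≤ x) (hS : v ∈ S) (hT : v ∈ T) :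
    IsLeast S v ∧ IsGreatest T v :=
  ⟨⟨hS, fun x hx => hle x hx v hT⟩, ⟨hT, fun y hy => hle v hS y hy⟩⟩

theorem two_mul_mul_abs_cross_le (β b₁ b₂ f₁ f₂ : ℝ) :
    2 * β * |b₂ * f₁ - b₁ * f₂| ≤ f₁ ^ 2 + f₂ ^ 2 + (b₁ ^ 2 + b₂ ^ 2) * β ^ 2 := by
  rcases abs_cases (b₂ * f₁ - b₁ * f₂) with ⟨h, -⟩ | ⟨h, -⟩ <;> rw [h]
  · nlinarith [sq_nonneg (f₁ - β * b₂), sq_nonneg (f₂ + β * b₁)]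
  · nlinarith [sq_nonneg (f₁ + β * b₂), sq_nonneg (f₂ - β * b₁)]

theorem dual_le_primal {β : ℝ} (hβ : β ∈ Set.Icc (0 : ℝ) 1) (a b₁ b₂ f₁ f₂ : ℝ) :
    2 * |a| * β - (b₁ ^ 2 + b₂ ^ 2) * β ^ 2 ≤
      f₁ ^ 2 + f₂ ^ 2 + 2 * |a + b₂ * f₁ - b₁ * f₂| := by
  set u := b₂ * f₁ - b₁ * f₂
  have htri : |a| ≤ |a + u| + |u| := by
    simpa using abs_sub (a + u) u
  calc 2 * |a| * β - (b₁ ^ 2 + b₂ ^ 2) * β ^ 2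
      ≤ 2 * β * |a + u| + (2 * β * |u| - (b₁ ^ 2 + b₂ ^ 2) * β ^ 2) := by nlinarith [hβ.1]
    _ ≤ 2 * |a + u| + (f₁ ^ 2 + f₂ ^ 2) := by
        gcongr ?_ + ?_
        · nlinarith [hβ.2, abs_nonneg (a + u)]
        · linarith [two_mul_mul_abs_cross_le β b₁ b₂ f₁ f₂]
    _ = f₁ ^ 2 + f₂ ^ 2 + 2 * |a + b₂ * f₁ - b₁ * f₂| := by rw [add_sub_assoc]; ring

theorem exists_cross_eq_and_sq_add_sq_eq {b₁ b₂ : ℝ} (hb : b₁ ^ 2 + b₂ ^ 2 ≠ 0) (u : ℝ) :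
    ∃ f₁ f₂ : ℝ, b₂ * f₁ - b₁ * f₂ = u ∧ f₁ ^ 2 + f₂ ^ 2 = u ^ 2 / (b₁ ^ 2 + b₂ ^ 2) := by
  refine ⟨u / (b₁ ^ 2 + b₂ ^ 2) * b₂, -(u / (b₁ ^ 2 + b₂ ^ 2) * b₁), ?_, ?_⟩ <;>
    field_simp <;> ring

theorem exists_primal_eq (a c : ℝ) {b₁ b₂ : ℝ} (hb : 0 < b₁ ^ 2 + b₂ ^ 2) :
    ∃ f₁ f₂ : ℝ, c + (f₁ ^ 2 + f₂ ^ 2) + 2 * |a + b₂ * f₁ - b₁ * f₂| =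
      if b₁ ^ 2 + b₂ ^ 2 ≤ |a| then c + 2 * |a| - (b₁ ^ 2 + b₂ ^ 2)
      else c + a ^ 2 / (b₁ ^ 2 + b₂ ^ 2) := by
  set n := b₁ ^ 2 + b₂ ^ 2
  suffices ∃ u : ℝ, c + u ^ 2 / n + 2 * |a + u| =
      if n ≤ |a| then c + 2 * |a| - n else c + a ^ 2 / n by
    obtain ⟨u, hu⟩ := this
    obtain ⟨f₁, f₂, hcross, hsq⟩ := exists_cross_eq_and_sq_add_sq_eq hb.ne' u
    exact ⟨f₁, f₂, by rw [hsq, add_sub_assoc, hcross, hu]⟩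
  split_ifs with hn
  · rcases abs_cases a with ⟨ha, ha0⟩ | ⟨ha, ha0⟩ <;> rw [ha] at hn ⊢
    · refine ⟨-n, ?_⟩
      rw [abs_of_nonneg (by linarith)]
      field_simp
      ring
    · refine ⟨n, ?_⟩
      rw [abs_of_nonpos (by linarith)]
      field_simp
      ring
  · exact ⟨-a, by simp⟩

theorem exists_dual_eq (a c : ℝ) {n : ℝ} (hn : 0 < n) :
    ∃ β ∈ Set.Icc (0 : ℝ) 1, c + 2 * |a| * β - n * β ^ 2 =
      if n ≤ |a| then c + 2 * |a| - n else c + a ^ 2 / n := by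
  split_ifs with hle
  · exact ⟨1, ⟨zero_le_one, le_rfl⟩, by ring⟩
  · refine ⟨|a| / n, ⟨by positivity, (div_le_one hn).2 (not_le.1 hle).le⟩, ?_⟩
    field_simp
    linear_combination sq_abs a

/-- For `a ∈ ℝ`, `b = (b₁,b₂) ≠ 0` and `c ∈ ℝ`, the minimum over `f ∈ ℝ²` of
`c + ‖f‖² + 2|a + b₂f₁ - b₁f₂|` is `c + 2|a| - ‖b‖²` if `|a| ≥ ‖b‖²` and `c + a²/‖b‖²`
otherwise; it coincides with the maximum over `β ∈ [0,1]` of `c + 2|a|β - ‖b‖²β²`. -/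
theorem holevo_mld_scalar_identity (a c b₁ b₂ : ℝ) (hb : ¬(b₁ = 0 ∧ b₂ = 0)) :
    let nb := b₁ ^ 2 + b₂ ^ 2
    let v := if nb ≤ |a| then c + 2 * |a| - nb else c + a ^ 2 / nb
    IsLeast {x : ℝ | ∃ f₁ f₂ : ℝ,
        x = c + (f₁ ^ 2 + f₂ ^ 2) + 2 * |a + b₂ * f₁ - b₁ * f₂|} v ∧
    IsGreatest {x : ℝ | ∃ β ∈ Set.Icc (0 : ℝ) 1,
        x = c + 2 * |a| * β - nb * β ^ 2} v := by
  have hnb : 0 < b₁ ^ 2 + b₂ ^ 2 := by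
    rcases not_and_or.mp hb with h | h <;> positivity
  obtain ⟨f₁, f₂, hf⟩ := exists_primal_eq a c hnb
  obtain ⟨β, hβ, hβv⟩ := exists_dual_eq a c hnb
  refine isLeast_and_isGreatest_of_forall_le ?_ ⟨f₁, f₂, hf.symm⟩ ⟨β, hβ, hβv.symm⟩
  rintro _ ⟨f₁, f₂, rfl⟩ _ ⟨β, hβ, rfl⟩
  linarith [dual_le_primal hβ a b₁ b₂ f₁ f₂]
end
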